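/- Let C be an abelian category and let φ : E ⟶ L be a morphism in the derived category D(C) such that H^n(E) and H^n(L) are zero for all n outside {-1, 0}, H^0(φ) is an isomorphism, and H^{-1}(φ) is an epimorphism. Let X ⟶^u E ⟶^v E' ⟶ X[1] be a distinguished triangle where H^n(X) is zero for all n ≠ -1, the induced map H^{-1}(X) ⟶ H^{-1}(E) is a monomorphism, and the composite H^{-1}(X) ⟶ H^{-1}(E) ⟶ H^{-1}(L) is zero. If φ' : E' ⟶ L satisfies v ≫ φ' = φ, then H^0(φ') is an isomorphism and H^{-1}(φ') is an epimorphism. -/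

import Mathlib

open CategoryTheory Limits Pretriangulated

/-- Coning off a subsheaf of `H^{-1}` that dies in `L` preserves the obstruction theory
conditions: if `φ : E ⟶ L` has `H^0 φ` an isomorphism and `H^{-1} φ` an epimorphism,
and `X ⟶ E ⟶ E' ⟶ X[1]` is a distinguished triangle with `X` concentrated in degree `-1`,
`H^{-1} X ⟶ H^{-1} E` a monomorphism whose composite with `H^{-1} φ` vanishes, then any
`φ' : E' ⟶ L` with `v ≫ φ' = φ` again has `H^0 φ'` an isomorphism and `H^{-1} φ'` an
epimorphism. -/
theorem induced_map_is_obstruction_theory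
    {C : Type*} [Category C] [Abelian C] [HasDerivedCategory C]
    {X E E' L : DerivedCategory C} (φ : E ⟶ L)
    (hE : ∀ n : ℤ, n ≠ -1 → n ≠ 0 → IsZero ((DerivedCategory.homologyFunctor C n).obj E))
    (hL : ∀ n : ℤ, n ≠ -1 → n ≠ 0 → IsZero ((DerivedCategory.homologyFunctor C n).obj L))
    (hφ0 : IsIso ((DerivedCategory.homologyFunctor C 0).map φ))
    (hφ1 : Epi ((DerivedCategory.homologyFunctor C (-1)).map φ))
    (u : X ⟶ E) (v : E ⟶ E') (w : E' ⟶ X⟦(1 : ℤ)⟧)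
    (hT : Triangle.mk u v w ∈ distTriang (DerivedCategory C))
    (hX : ∀ n : ℤ, n ≠ -1 → IsZero ((DerivedCategory.homologyFunctor C n).obj X))
    (hmono : Mono ((DerivedCategory.homologyFunctor C (-1)).map u))
    (hcomp : (DerivedCategory.homologyFunctor C (-1)).map u ≫
      (DerivedCategory.homologyFunctor C (-1)).map φ = 0)
    (φ' : E' ⟶ L) (hφ' : v ≫ φ' = φ) :
    IsIso ((DerivedCategory.homologyFunctor C 0).map φ') ∧
      Epi ((DerivedCategory.homologyFunctor C (-1)).map φ') := by
  set T := Triangle.mk u v w with hTdef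
  -- H^0 v is epi: the connecting map lands in H^1 X = 0
  have hepi0 : Epi ((DerivedCategory.homologyFunctor C 0).map v) := by
    refine (DerivedCategory.HomologySequence.epi_homologyMap_mor₂_iff T hT 0 1 (by ring)).mpr ?_
    exact (hX 1 (by norm_num)).eq_of_tgt _ _
  -- H^0 v is mono: H^0 u = 0 since H^0 X = 0
  have hmono0 : Mono ((DerivedCategory.homologyFunctor C 0).map v) := by
    refine (DerivedCategory.HomologySequence.mono_homologyMap_mor₂_iff T hT 0).mpr ?_
    exact (hX 0 (by norm_num)).eq_of_src _ _
  have hiso0 : IsIso ((DerivedCategory.homologyFunctor C 0).map v) :=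
    isIso_of_mono_of_epi _
  -- H^{-1} v is epi: the connecting map lands in H^0 X = 0
  have hepi1 : Epi ((DerivedCategory.homologyFunctor C (-1)).map v) := by
    refine (DerivedCategory.HomologySequence.epi_homologyMap_mor₂_iff T hT (-1) 0 (by ring)).mpr ?_
    exact (hX 0 (by norm_num)).eq_of_tgt _ _
  have hc0 : (DerivedCategory.homologyFunctor C 0).map v ≫
      (DerivedCategory.homologyFunctor C 0).map φ' =
      (DerivedCategory.homologyFunctor C 0).map φ := by
    rw [← Functor.map_comp, hφ']
  have hc1 : (DerivedCategory.homologyFunctor C (-1)).map v ≫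
      (DerivedCategory.homologyFunctor C (-1)).map φ' =
      (DerivedCategory.homologyFunctor C (-1)).map φ := by
    rw [← Functor.map_comp, hφ']
  constructor
  · have : IsIso ((DerivedCategory.homologyFunctor C 0).map v ≫
        (DerivedCategory.homologyFunctor C 0).map φ') := by rw [hc0]; exact hφ0
    exact IsIso.of_isIso_comp_left ((DerivedCategory.homologyFunctor C 0).map v) _
  · have : Epi ((DerivedCategory.homologyFunctor C (-1)).map v ≫
        (DerivedCategory.homologyFunctor C (-1)).map φ') := by rw [hc1]; exact hφ1
    exact epi_of_epi ((DerivedCategory.homologyFunctor C (-1)).map v) _
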